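/- arXiv:2406.03998 — 5 statements merged into one kernel-verified Lean document; each statement's English description precedes it below -/
import Mathlib

section
/- If a is a 4×4 matrix with det a = 1 (i.e., a ∈ SL(4,K)), then its second compound matrix m₂(a) has determinant 1, i.e., m₂(a) ∈ SL(6,K). -/
open Matrix

def pr : Fin 6 → Fin 4 × Fin 4
  | 0 => (0, 1)
  | 1 => (0, 2)
  | 2 => (0, 3)
  | 3 => (1, 2)
  | 4 => (1, 3)
  | 5 => (2, 3)

/-- The 2×2 minor of `a` on rows `r.1 < r.2` and columns `c.1 < c.2`. -/
def minor2 {K : Type*} [CommRing K] (a : Matrix (Fin 4) (Fin 4) K)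
    (r c : Fin 4 × Fin 4) : K :=
  (a.submatrix ![r.1, r.2] ![c.1, c.2]).det

/-- The second compound matrix of a 4×4 matrix: the 6×6 matrix of 2×2 minors,
rows and columns indexed by the 2-element index pairs in lexicographic order. -/
def m2 {K : Type*} [CommRing K] (a : Matrix (Fin 4) (Fin 4) K) :
    Matrix (Fin 6) (Fin 6) K :=
  fun i j => minor2 a (pr i) (pr j)

/-! By Cauchy–Binet, `m2` is multiplicative. If `a` is upper triangular, so is `m2 a` (the pairs
being ordered lexicographically), with diagonal entries `a p p * a q q` for `p < q`; each index
lies in three of the six pairs, so `det (m2 a) = (det a) ^ 3`, and likewise for lower triangular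
`a` by transposing. Over a field every matrix is a product of transvections and a diagonal
matrix, all of them triangular, hence `det (m2 a) = (det a) ^ 3` for every `a`. -/

section CommRing

variable {K : Type*} [CommRing K]

@[simp]
lemma minor2_apply (a : Matrix (Fin 4) (Fin 4) K) (r c : Fin 4 × Fin 4) :
    minor2 a r c = a r.1 c.1 * a r.2 c.2 - a r.1 c.2 * a r.2 c.1 := by
  rw [minor2, det_fin_two]
  simp

lemma m2_mul (a b : Matrix (Fin 4) (Fin 4) K) : m2 (a * b) = m2 a * m2 b := by
  ext i j
  fin_cases i <;> fin_cases j <;>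
    (simp [m2, pr, mul_apply, Fin.sum_univ_four, Fin.sum_univ_six]; ring)

lemma m2_transpose (a : Matrix (Fin 4) (Fin 4) K) : m2 aᵀ = (m2 a)ᵀ := by
  ext i j
  simp only [m2, minor2, transpose_apply, ← transpose_submatrix, det_transpose]

lemma pr_fst_lt_snd (i : Fin 6) : (pr i).1 < (pr i).2 := by
  fin_cases i <;> decide

lemma isUpperTriangular_m2 {a : Matrix (Fin 4) (Fin 4) K} (h : a.IsUpperTriangular) :
    (m2 a).IsUpperTriangular := by
  have h10 : a 1 0 = 0 := h (by decide)
  have h20 : a 2 0 = 0 := h (by decide)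
  have h30 : a 3 0 = 0 := h (by decide)
  have h21 : a 2 1 = 0 := h (by decide)
  have h31 : a 3 1 = 0 := h (by decide)
  have h32 : a 3 2 = 0 := h (by decide)
  intro i j hji
  fin_cases i <;> fin_cases j <;>
    first | exact absurd hji (by decide) | simp [m2, pr, h10, h20, h30, h21, h31, h32]

lemma m2_apply_self_of_isUpperTriangular {a : Matrix (Fin 4) (Fin 4) K}
    (h : a.IsUpperTriangular) (i : Fin 6) :
    m2 a i i = a (pr i).1 (pr i).1 * a (pr i).2 (pr i).2 := by
  simp [m2, minor2_apply, h (pr_fst_lt_snd i)]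

lemma det_m2_of_isUpperTriangular {a : Matrix (Fin 4) (Fin 4) K} (h : a.IsUpperTriangular) :
    (m2 a).det = a.det ^ 3 := by
  rw [det_of_isUpperTriangular (isUpperTriangular_m2 h), det_of_isUpperTriangular h]
  simp only [m2_apply_self_of_isUpperTriangular h, Fin.prod_univ_six, Fin.prod_univ_four, pr]
  ring

lemma det_m2_of_isLowerTriangular {a : Matrix (Fin 4) (Fin 4) K} (h : a.IsLowerTriangular) :
    (m2 a).det = a.det ^ 3 := by
  rw [← det_transpose, ← m2_transpose, det_m2_of_isUpperTriangular h.transpose, det_transpose]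

end CommRing

theorem det_m2 {K : Type*} [Field K] (a : Matrix (Fin 4) (Fin 4) K) :
    (m2 a).det = a.det ^ 3 := by
  refine diagonal_transvection_induction (fun a => (m2 a).det = a.det ^ 3) a ?_ ?_ ?_
  · exact fun D _ => det_m2_of_isUpperTriangular (blockTriangular_diagonal D)
  · rintro ⟨i, j, -, c⟩
    rcases le_total i j with hij | hji
    · exact det_m2_of_isUpperTriangular (blockTriangular_transvection hij c)
    · exact det_m2_of_isLowerTriangular (blockTriangular_transvection' hji c)
  · intro A B hA hB
    simp only [m2_mul, det_mul, hA, hB, mul_pow]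

/-- If a ∈ SL(4,K) then m₂(a) ∈ SL(6,K). -/
theorem m2_mem_SL {K : Type*} [Field K] (a : Matrix (Fin 4) (Fin 4) K)
    (ha : a.det = 1) : (m2 a).det = 1 := by
  rw [det_m2, ha, one_pow]
end

section
/- For a 6×6 diagonal matrix b = Diag(μ₁,...,μ₆) with all μᵢ nonzero, there exists a 4×4 matrix a ∈ GL(4,K) with m₂(a) = b if and only if μ₁μ₆ = μ₂μ₅ = μ₃μ₄ and the quantities μ₁μ₂/μ₄ (equivalently μ₁μ₃/μ₅, μ₂μ₃/μ₆) admit a square root in K. -/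
/-!
If `m2 a = diagonal μ` with every `μ x ≠ 0`, then `a` is diagonal: on a row pair `pr x`, the
vanishing of the `3 × 3` minors with a repeated row leaves `a k c * μ x = 0` whenever `c` lies
outside the pair. For `a = diagonal d` one has `m2 a = diagonal (dᵢ dⱼ)`, and the system
`dᵢ dⱼ = μ` is solvable exactly under the two product relations, with `d 0` a square root of
`μ 0 * μ 1 / μ 3`.
-/

open Matrix

section CommRing

variable {K : Type*} [CommRing K]

lemma minor2_apply_s13 (a : Matrix (Fin 4) (Fin 4) K) (i j k l : Fin 4) :
    minor2 a (i, j) (k, l) = a i k * a j l - a i l * a j k := by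
  rw [minor2, det_fin_two]
  simp

def pairProducts (d : Fin 4 → K) : Fin 6 → K := fun x => d (pr x).1 * d (pr x).2

lemma m2_diagonal (d : Fin 4 → K) : m2 (diagonal d) = diagonal (pairProducts d) := by
  ext x y
  fin_cases x <;> fin_cases y <;> simp [m2, pr, pairProducts, minor2_apply_s13]

/-- Laplace expansions along row `k` of the `3 × 3` minors of `a` on the rows `k`, `(pr x).1`,
`(pr x).2` and the column triples `{0,1,2}`, `{0,1,3}`, `{0,2,3}`, `{1,2,3}`; they vanish because
row `k` is repeated. -/
lemma m2_laplace (a : Matrix (Fin 4) (Fin 4) K) (x : Fin 6) {k : Fin 4}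
    (hk : k = (pr x).1 ∨ k = (pr x).2) :
    a k 0 * m2 a x 3 - a k 1 * m2 a x 1 + a k 2 * m2 a x 0 = 0 ∧
    a k 0 * m2 a x 4 - a k 1 * m2 a x 2 + a k 3 * m2 a x 0 = 0 ∧
    a k 0 * m2 a x 5 - a k 2 * m2 a x 2 + a k 3 * m2 a x 1 = 0 ∧
    a k 1 * m2 a x 5 - a k 2 * m2 a x 4 + a k 3 * m2 a x 3 = 0 := by
  fin_cases x <;> rcases hk with rfl | rfl <;> simp only [m2, pr, minor2_apply_s13] <;>
    refine ⟨?_, ?_, ?_, ?_⟩ <;> ring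

theorem isDiag_of_m2_eq_diagonal [NoZeroDivisors K] {a : Matrix (Fin 4) (Fin 4) K}
    {μ : Fin 6 → K} (hμ : ∀ x, μ x ≠ 0) (h : m2 a = diagonal μ) : a.IsDiag := by
  intro k c hkc
  obtain ⟨x, hk, hc⟩ : ∃ x : Fin 6,
      (k = (pr x).1 ∨ k = (pr x).2) ∧ c ≠ (pr x).1 ∧ c ≠ (pr x).2 := by
    revert k c; decide
  have hlaplace := m2_laplace a x hk
  rw [h] at hlaplace
  have hμx := hμ x
  fin_cases x <;> fin_cases c <;> simp_all [pr]

end CommRing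

section Field

variable {K : Type*} [Field K] {μ : Fin 6 → K}

lemma exists_isUnit_m2_eq_diagonal_iff (hμ : ∀ x, μ x ≠ 0) :
    (∃ a : Matrix (Fin 4) (Fin 4) K, IsUnit a.det ∧ m2 a = diagonal μ) ↔
      ∃ d : Fin 4 → K, pairProducts d = μ := by
  constructor
  · rintro ⟨a, -, h⟩
    refine ⟨diag a, diagonal_injective ?_⟩
    rw [← m2_diagonal, (isDiag_of_m2_eq_diagonal hμ h).diagonal_diag, h]
  · rintro ⟨d, rfl⟩
    refine ⟨diagonal d, ?_, m2_diagonal d⟩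
    have h05 : d 0 * d 1 * (d 2 * d 3) ≠ 0 := mul_ne_zero (hμ 0) (hμ 5)
    rw [det_diagonal, Fin.prod_univ_four, mul_assoc (d 0 * d 1)]
    exact isUnit_iff_ne_zero.2 h05

lemma exists_pairProducts_eq_iff (hμ : ∀ x, μ x ≠ 0) :
    (∃ d : Fin 4 → K, pairProducts d = μ) ↔
      μ 0 * μ 5 = μ 1 * μ 4 ∧ μ 1 * μ 4 = μ 2 * μ 3 ∧ ∃ x : K, x ^ 2 = μ 0 * μ 1 / μ 3 := by
  constructor
  · rintro ⟨d, rfl⟩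
    refine ⟨?_, ?_, d 0, (eq_div_iff (hμ 3)).2 ?_⟩ <;> simp only [pairProducts, pr] <;> ring
  · rintro ⟨h05, h14, x, hx⟩
    have hx0 : x ≠ 0 := by
      rintro rfl
      exact div_ne_zero (mul_ne_zero (hμ 0) (hμ 1)) (hμ 3) (by simpa using hx.symm)
    have hx' : x ^ 2 * μ 3 = μ 0 * μ 1 := by rw [hx, div_mul_cancel₀ _ (hμ 3)]
    refine ⟨![x, μ 0 / x, μ 1 / x, μ 2 / x], funext fun i => ?_⟩
    fin_cases i <;> simp only [pairProducts, pr, cons_val_zero, cons_val_one, cons_val, Fin.isValue,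
      Fin.zero_eta, Fin.mk_one, Fin.reduceFinMk] <;> field_simp
    · exact hx'.symm
    · exact mul_left_cancel₀ (hμ 3) (by linear_combination (-(μ 4)) * hx' - μ 0 * h14)
    · exact mul_left_cancel₀ (hμ 3)
        (by linear_combination (-(μ 5)) * hx' - μ 1 * h05 - μ 1 * h14)

end Field

/-- A diagonal matrix Diag(μ₁,…,μ₆) with all μᵢ ≠ 0 is the second compound of
some a ∈ GL(4,K) iff μ₁μ₆ = μ₂μ₅ = μ₃μ₄ and μ₁μ₂/μ₄ is a square in K. -/
theorem diagonal_eq_m2_iff {K : Type*} [Field K] (μ : Fin 6 → K)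
    (hμ : ∀ i, μ i ≠ 0) :
    (∃ a : Matrix (Fin 4) (Fin 4) K, IsUnit a.det ∧ m2 a = Matrix.diagonal μ) ↔
      (μ 0 * μ 5 = μ 1 * μ 4 ∧ μ 1 * μ 4 = μ 2 * μ 3 ∧
        ∃ x : K, x ^ 2 = μ 0 * μ 1 / μ 3) :=
  (exists_isUnit_m2_eq_diagonal_iff hμ).trans (exists_pairProducts_eq_iff hμ)
end

section
/- For an n×n matrix a, det(a) = Σ_{j<k} (-1)^(j+k+1) M_{12}^{jk} · M̄_{12}^{jk}, where the sum is over all pairs 1 ≤ j < k ≤ n, M_{12}^{jk} is the 2×2 minor of a on rows 1,2 and columns j,k, and M̄_{12}^{jk} is the (n−2)×(n−2) minor of a on rows {3,...,n} and columns {1,...,n}∖{j,k}. -/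
open Matrix

/-!
Expand `det a` along row 0 and then expand each minor along its top row (row 1 of `a`): this
writes `det a` as a sum over ordered pairs `j ≠ k` of `± a 0 j * a 1 k` times the minor on rows
`2, …` and the columns other than `j, k`. That minor is symmetric in `(j, k)` while the sign is
antisymmetric, so the terms for `(j, k)` and `(k, j)` combine into a 2×2 determinant.
-/

noncomputable def compEmb {n : ℕ} (j k : Fin (n + 2)) (h : j ≠ k) :
    Fin n → Fin (n + 2) :=
  (({j, k}ᶜ : Finset (Fin (n + 2))).orderEmbOfFin (by
    rw [Finset.card_compl, Finset.card_insert_of_notMem (by simpa using h),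
      Finset.card_singleton]
    simp))

theorem Fintype.sum_prod_eq_sum_lt_add_swap {ι M : Type*} [Fintype ι] [LinearOrder ι]
    [AddCommMonoid M] (f : ι × ι → M) (hf : ∀ i, f (i, i) = 0) :
    ∑ p, f p = ∑ p : ι × ι, if p.1 < p.2 then f p + f p.swap else 0 := by
  have hsplit : ∀ p : ι × ι,
      f p = (if p.1 < p.2 then f p else 0) + (if p.2 < p.1 then f p else 0) := by
    rintro ⟨i, j⟩
    rcases lt_trichotomy i j with h | rfl | h
    · simp [h, h.not_gt]
    · simp [hf]
    · simp [h, h.not_gt]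
  have hswap : ∑ p : ι × ι, (if p.2 < p.1 then f p else 0) =
      ∑ p : ι × ι, if p.1 < p.2 then f p.swap else 0 :=
    (Fintype.sum_equiv (Equiv.prodComm ι ι) _ _ fun _ => rfl).symm
  rw [Fintype.sum_congr _ _ hsplit, Finset.sum_add_distrib, hswap, ← Finset.sum_add_distrib]
  simp only [ite_add_ite, add_zero]

theorem compEmb_comm {n : ℕ} {j k : Fin (n + 2)} (h : j ≠ k) :
    compEmb j k h = compEmb k j h.symm := by
  unfold compEmb
  simp_rw [Finset.pair_comm j k]

theorem compEmb_succAbove {n : ℕ} (j : Fin (n + 2)) (i : Fin (n + 1)) :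
    compEmb j (j.succAbove i) (Fin.ne_succAbove j i) = j.succAbove ∘ i.succAbove := by
  refine (Finset.orderEmbOfFin_unique _ (fun x => ?_)
    ((Fin.strictMono_succAbove j).comp (Fin.strictMono_succAbove i))).symm
  simp [Fin.succAbove_ne, Fin.succAbove_ne i x]

-- `(-1) ^ (j + i)` where `k` is the `i`-th column other than `j` (see `pairSign_succAbove`).
def pairSign (R : Type*) [CommRing R] {m : ℕ} (j k : Fin m) : R :=
  if j < k then -(-1) ^ (j.val + k.val) else (-1) ^ (j.val + k.val)

section

variable {R : Type*} [CommRing R]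

theorem pairSign_succAbove {m : ℕ} (j : Fin (m + 1)) (i : Fin m) :
    pairSign R j (j.succAbove i) = (-1) ^ (j.val + i.val) := by
  rcases Fin.lt_or_le i.castSucc j with h | h
  · rw [pairSign, Fin.succAbove_of_castSucc_lt _ _ h, if_neg (by simpa using h.not_gt)]
    rfl
  · rw [pairSign, Fin.succAbove_of_le_castSucc _ _ h, if_pos (h.trans_lt i.castSucc_lt_succ),
      Fin.val_succ, ← add_assoc, pow_succ]
    ring

noncomputable def laplaceTwoRowsTerm {n : ℕ} (a : Matrix (Fin (n + 2)) (Fin (n + 2)) R)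
    (j k : Fin (n + 2)) : R :=
  if h : j ≠ k then
    pairSign R j k * a 0 j * a 1 k *
      (a.submatrix (fun r : Fin n => r.addNat 2) (compEmb j k h)).det
  else 0

theorem laplaceTwoRowsTerm_self {n : ℕ} (a : Matrix (Fin (n + 2)) (Fin (n + 2)) R)
    (j : Fin (n + 2)) : laplaceTwoRowsTerm a j j = 0 :=
  dif_neg (not_not.mpr rfl)

theorem det_eq_sum_sum_laplaceTwoRowsTerm {n : ℕ} (a : Matrix (Fin (n + 2)) (Fin (n + 2)) R) :
    a.det = ∑ j, ∑ k, laplaceTwoRowsTerm a j k := by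
  rw [det_succ_row_zero]
  refine Finset.sum_congr rfl fun j _ => ?_
  rw [Fin.sum_univ_succAbove _ j, laplaceTwoRowsTerm_self, zero_add, det_succ_row_zero,
    Finset.mul_sum]
  refine Finset.sum_congr rfl fun i _ => ?_
  rw [laplaceTwoRowsTerm, dif_pos (Fin.ne_succAbove j i), pairSign_succAbove, compEmb_succAbove,
    submatrix_submatrix, pow_add]
  have hrows : (Fin.succ ∘ Fin.succ : Fin n → Fin (n + 2)) = fun r => r.addNat 2 := rfl
  rw [hrows]
  simp only [submatrix_apply, Fin.succ_zero_eq_one]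
  ring

theorem laplaceTwoRowsTerm_add_swap {n : ℕ} (a : Matrix (Fin (n + 2)) (Fin (n + 2)) R)
    {j k : Fin (n + 2)} (h : j < k) :
    laplaceTwoRowsTerm a j k + laplaceTwoRowsTerm a k j =
      (-1 : R) ^ ((j.val + 1) + (k.val + 1) + 1) * (a.submatrix ![0, 1] ![j, k]).det *
        (a.submatrix (fun r : Fin n => r.addNat 2) (compEmb j k h.ne)).det := by
  rw [laplaceTwoRowsTerm, laplaceTwoRowsTerm, dif_pos h.ne, dif_pos h.ne', compEmb_comm h.ne',
    pairSign, pairSign, if_pos h, if_neg h.not_gt, det_fin_two]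
  simp only [submatrix_apply, cons_val_zero, cons_val_one, cons_val_fin_one]
  ring

end

/-- Laplace expansion of an (n+2)×(n+2) determinant along the first two rows:
`det a = ∑_{j<k} (-1)^{j+k+1} M_{12}^{jk} · M̄_{12}^{jk}` (1-based indices),
where `M_{12}^{jk}` is the 2×2 minor on rows 1,2 and columns j,k, and
`M̄_{12}^{jk}` is the complementary minor on rows 3,…,n+2 and the remaining
columns. -/
theorem det_eq_laplace_two_rows {n : ℕ} {R : Type*} [CommRing R]
    (a : Matrix (Fin (n + 2)) (Fin (n + 2)) R) :
    a.det = ∑ p : Fin (n + 2) × Fin (n + 2),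
      if h : p.1 < p.2 then
        (-1 : R) ^ ((p.1.val + 1) + (p.2.val + 1) + 1) *
          (a.submatrix ![0, 1] ![p.1, p.2]).det *
          (a.submatrix (fun r : Fin n => r.addNat 2) (compEmb p.1 p.2 h.ne)).det
      else 0 := by
  rw [det_eq_sum_sum_laplaceTwoRowsTerm, ← Fintype.sum_prod_type',
    Fintype.sum_prod_eq_sum_lt_add_swap _ fun j => laplaceTwoRowsTerm_self a j]
  refine Fintype.sum_congr _ _ fun p => ?_
  split_ifs with h
  · exact laplaceTwoRowsTerm_add_swap a h
  · rfl
end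

section
/- For an n×n matrix a and 1 ≤ p ≤ n, det(a) = Σ (-1)^(j₁+⋯+j_p + p(p+1)/2) M_{1⋯p}^{j₁⋯j_p} · M̄, summed over all p-element column subsets j₁<⋯<j_p, where M_{1⋯p}^{j₁⋯j_p} is the p×p minor on rows 1,...,p and columns j₁,...,j_p, and M̄ is the complementary (n−p)×(n−p) minor on rows p+1,...,n and the complementary columns. -/
/-!
Every permutation of `Fin n` factors uniquely as `r ∘ (τ ⊕ ρ) ∘ c_S⁻¹`, where `S` is the set of
columns sent to the first `p` rows, `c_S : Fin p ⊕ Fin (n - p) ≃ Fin n` enumerates `S` and then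
`Sᶜ` in increasing order, `r` enumerates the first `p` rows and then the remaining ones, and
`τ`, `ρ` are permutations of `Fin p` and `Fin (n - p)`. Grouping the Leibniz expansion of `det a`
by `S`, the terms for a fixed `S` add up to `sign (r ∘ c_S⁻¹)` times the product of the two
complementary minors. The inversions of the shuffle `r ∘ c_S⁻¹` are exactly the pairs `b < a`
with `a ∈ S` and `b ∉ S`; with 0-based indices there are `∑_{j ∈ S} (j + 1) - p (p + 1) / 2`
of them, which gives the sign.
-/

open Matrix Equiv Equiv.Perm Finset

namespace Equiv.Perm

theorem sign_eq_signAux {n : ℕ} (f : Perm (Fin n)) : sign f = signAux f := by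
  induction f using swap_induction_on with
  | one => rw [map_one, signAux_one]
  | swap_mul f x y hxy ih => rw [map_mul, signAux_mul, ih, sign_swap hxy, signAux_swap hxy]

theorem sign_eq_neg_one_pow_card_inversions {n : ℕ} (f : Perm (Fin n)) :
    sign f = (-1) ^ #{x ∈ finPairsLT n | f x.1 ≤ f x.2} := by
  rw [sign_eq_signAux, signAux, prod_ite, prod_const, prod_const_one, mul_one]

variable {ι α β : Type*}

def blockPerm (c r : α ⊕ β ≃ ι) (τ : Perm α) (ρ : Perm β) : Perm ι :=
  c.symm.trans ((τ.sumCongr ρ).trans r)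

variable (c r : α ⊕ β ≃ ι) (τ : Perm α) (ρ : Perm β)

@[simp] theorem blockPerm_apply_inl (i : α) :
    blockPerm c r τ ρ (c (.inl i)) = r (.inl (τ i)) := by
  simp [blockPerm]

@[simp] theorem blockPerm_apply_inr (k : β) :
    blockPerm c r τ ρ (c (.inr k)) = r (.inr (ρ k)) := by
  simp [blockPerm]

theorem isLeft_symm_blockPerm (j : ι) :
    (r.symm (blockPerm c r τ ρ j)).isLeft = (c.symm j).isLeft := by
  obtain ⟨x | x, rfl⟩ := c.surjective j <;> simp

theorem blockPerm_injective :
    Function.Injective fun x : Perm α × Perm β => blockPerm c r x.1 x.2 := by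
  rintro ⟨τ, ρ⟩ ⟨τ', ρ'⟩ h
  have : τ.sumCongr ρ = τ'.sumCongr ρ' := by
    ext x; simpa [blockPerm] using congrArg (fun σ : Perm ι => r.symm (σ (c x))) h
  exact sumCongrHom_injective (a₁ := (τ, ρ)) (a₂ := (τ', ρ')) this

variable [DecidableEq ι] [Fintype ι] [DecidableEq α] [Fintype α] [DecidableEq β] [Fintype β]

theorem sign_blockPerm :
    sign (blockPerm c r τ ρ) = sign (c.symm.trans r) * (sign τ * sign ρ) := by
  have : blockPerm c r τ ρ = (c.symm.trans ((τ.sumCongr ρ).trans c)).trans (c.symm.trans r) := by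
    ext j; simp [blockPerm]
  rw [this, sign_trans, ← trans_assoc, sign_symm_trans_trans, sign_sumCongr]

end Equiv.Perm

theorem Matrix.sign_mul_det_mul_det_eq_sum_blockPerm {ι α β R : Type*} [DecidableEq ι]
    [Fintype ι] [DecidableEq α] [Fintype α] [DecidableEq β] [Fintype β] [CommRing R]
    (A : Matrix ι ι R) (c r : α ⊕ β ≃ ι) :
    (sign (c.symm.trans r) : R) * (A.submatrix (r ∘ .inl) (c ∘ .inl)).det *
        (A.submatrix (r ∘ .inr) (c ∘ .inr)).det =
      ∑ τ : Perm α, ∑ ρ : Perm β,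
        (sign (blockPerm c r τ ρ) : R) * ∏ j, A (blockPerm c r τ ρ j) j := by
  simp_rw [det_apply', mul_assoc, sum_mul_sum, mul_sum]
  refine sum_congr rfl fun τ _ => sum_congr rfl fun ρ _ => ?_
  rw [sign_blockPerm, ← c.prod_comp, Fintype.prod_sum_type]
  simp only [blockPerm_apply_inl, blockPerm_apply_inr, submatrix_apply, Function.comp_apply,
    Units.val_mul, Int.cast_mul]
  ring

section SortedFinset

variable {α : Type*} [LinearOrder α]

theorem Finset.card_filter_le_orderEmbOfFin (s : Finset α) {k : ℕ} (h : #s = k) (i : Fin k) :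
    #{b ∈ s | b ≤ s.orderEmbOfFin h i} = i + 1 := by
  have : {b ∈ s | b ≤ s.orderEmbOfFin h i} = (Iic i).map (s.orderEmbOfFin h).toEmbedding := by
    ext b
    constructor
    · intro hb
      obtain ⟨hbs, hbi⟩ := mem_filter.mp hb
      obtain ⟨j, rfl⟩ : b ∈ Set.range (s.orderEmbOfFin h) := by simpa using hbs
      simpa using hbi
    · intro hb
      obtain ⟨j, hj, rfl⟩ := mem_map.mp hb
      simpa using mem_Iic.mp hj
  rw [this, card_map, Fin.card_Iic]

theorem Finset.sum_card_filter_le (s : Finset α) :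
    ∑ a ∈ s, #{b ∈ s | b ≤ a} = #s * (#s + 1) / 2 := by
  nth_rw 1 [← s.map_orderEmbOfFin_univ rfl]
  simp only [sum_map, RelEmbedding.coe_toEmbedding, card_filter_le_orderEmbOfFin]
  rw [Fin.sum_univ_eq_sum_range (· + 1), ← add_zero (∑ i ∈ range #s, (i + 1)),
    ← sum_range_succ' (fun i => i), sum_range_id, Nat.add_sub_cancel, mul_comm]

variable [Fintype α] [DecidableEq α]

@[simp] theorem Finset.orderEmbOfFin_compl_notMem (s : Finset α) {k : ℕ} (h : #sᶜ = k)
    (i : Fin k) : sᶜ.orderEmbOfFin h i ∉ s :=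
  mem_compl.mp (orderEmbOfFin_mem _ h i)

theorem isLeft_finSumEquivOfFinset_symm {s : Finset α} {m k : ℕ} (hm : #s = m) (hk : #sᶜ = k)
    (j : α) : ((finSumEquivOfFinset hm hk).symm j).isLeft ↔ j ∈ s := by
  obtain ⟨x | x, rfl⟩ := (finSumEquivOfFinset hm hk).surjective j <;>
    simp only [Equiv.symm_apply_apply] <;> simp

end SortedFinset

section Shuffle

variable {n p : ℕ} (hp : p ≤ n)

def finSumFinSubEquiv : Fin p ⊕ Fin (n - p) ≃ Fin n :=
  finSumFinEquiv.trans (finCongr (Nat.add_sub_cancel' hp))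

@[simp] theorem finSumFinSubEquiv_inl (i : Fin p) :
    finSumFinSubEquiv hp (.inl i) = Fin.castLE hp i := rfl

@[simp] theorem finSumFinSubEquiv_inr (k : Fin (n - p)) :
    finSumFinSubEquiv hp (.inr k) = ⟨p + k, by omega⟩ := rfl

variable {S : Finset (Fin n)} (hS : #S = p)

include hS in
theorem card_compl_eq_sub : #Sᶜ = n - p := by
  rw [card_compl, hS, Fintype.card_fin]

def finSumEquivOfCardEq : Fin p ⊕ Fin (n - p) ≃ Fin n :=
  finSumEquivOfFinset hS (card_compl_eq_sub hS)

/-- Moves `S`, in increasing order, to the first `p` positions and `Sᶜ` to the remaining ones. -/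
abbrev shuffle : Perm (Fin n) := (finSumEquivOfCardEq hS).symm.trans (finSumFinSubEquiv hp)

/- `shuffle` is increasing on `S` and on `Sᶜ`, and sends `S` below `p` and `Sᶜ` to `p` or above. -/
theorem shuffle_le_shuffle_iff {a b : Fin n} (hba : b < a) :
    shuffle hp hS a ≤ shuffle hp hS b ↔ a ∈ S ∧ b ∉ S := by
  obtain ⟨x | x, rfl⟩ := (finSumEquivOfCardEq hS).surjective a <;>
  obtain ⟨y | y, rfl⟩ := (finSumEquivOfCardEq hS).surjective b <;>
  simp only [shuffle, Equiv.trans_apply, Equiv.symm_apply_apply] <;>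
  simp [finSumEquivOfCardEq] at hba ⊢ <;>
  simp only [Fin.le_def, Fin.lt_def, Fin.val_castLE] at * <;> omega

theorem card_inversions_shuffle_add :
    #{x ∈ finPairsLT n | shuffle hp hS x.1 ≤ shuffle hp hS x.2} + p * (p + 1) / 2 =
      ∑ j ∈ S, (j + 1 : ℕ) := by
  have hinv : {x ∈ finPairsLT n | shuffle hp hS x.1 ≤ shuffle hp hS x.2} =
      S.sigma fun a => {b ∈ Sᶜ | b < a} := by
    ext ⟨a, b⟩
    simp only [mem_filter, mem_finPairsLT, mem_sigma, mem_compl]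
    constructor
    · rintro ⟨hba, hle⟩
      obtain ⟨ha, hb⟩ := (shuffle_le_shuffle_iff hp hS hba).mp hle
      exact ⟨ha, hb, hba⟩
    · rintro ⟨ha, hb, hba⟩
      exact ⟨hba, (shuffle_le_shuffle_iff hp hS hba).mpr ⟨ha, hb⟩⟩
  have hsplit : ∀ a ∈ S, #{b ∈ Sᶜ | b < a} + #{b ∈ S | b ≤ a} = a + 1 := by
    intro a ha
    have hlt : {b ∈ Sᶜ | b < a} = {b ∈ Iic a | b ∉ S} := by
      ext b
      simp only [mem_filter, mem_compl, mem_Iic]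
      exact ⟨fun h => ⟨h.2.le, h.1⟩,
        fun h => ⟨h.2, lt_of_le_of_ne h.1 (by rintro rfl; exact h.2 ha)⟩⟩
    have hle : {b ∈ S | b ≤ a} = {b ∈ Iic a | b ∈ S} := by
      ext b; simp [and_comm]
    rw [hlt, hle, add_comm, card_filter_add_card_filter_not, Fin.card_Iic]
  rw [hinv, card_sigma, ← hS, ← sum_card_filter_le, ← sum_add_distrib]
  exact sum_congr rfl hsplit

theorem sign_shuffle :
    sign (shuffle hp hS) = (-1) ^ (∑ j ∈ S, (j + 1 : ℕ) + p * (p + 1) / 2) := by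
  rw [sign_eq_neg_one_pow_card_inversions, ← card_inversions_shuffle_add, add_assoc, ← two_mul,
    pow_add, pow_mul, neg_one_sq, one_pow, mul_one]

end Shuffle

theorem bijective_blockPerm_finSumEquivOfCardEq {n p : ℕ} (hp : p ≤ n) :
    Function.Bijective
      fun x : {S : Finset (Fin n) // #S = p} × Perm (Fin p) × Perm (Fin (n - p)) =>
        blockPerm (finSumEquivOfCardEq x.1.2) (finSumFinSubEquiv hp) x.2.1 x.2.2 := by
  rw [Fintype.bijective_iff_injective_and_card]
  constructor
  · rintro ⟨⟨S, hS⟩, τ, ρ⟩ ⟨⟨S', hS'⟩, τ', ρ'⟩ h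
    obtain rfl : S = S' := by
      ext j
      have hleft := congrArg (fun σ : Perm (Fin n) => ((finSumFinSubEquiv hp).symm (σ j)).isLeft) h
      simp only [isLeft_symm_blockPerm] at hleft
      rw [← isLeft_finSumEquivOfFinset_symm hS (card_compl_eq_sub hS),
        ← isLeft_finSumEquivOfFinset_symm hS' (card_compl_eq_sub hS')]
      exact Bool.coe_iff_coe.mpr hleft
    obtain ⟨rfl, rfl⟩ := Prod.ext_iff.mp (blockPerm_injective _ _ h)
    rfl
  · simp only [Fintype.card_prod, Fintype.card_perm, Fintype.card_finset_len, Fintype.card_fin]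
    rw [← Nat.choose_mul_factorial_mul_factorial hp, mul_assoc]

/-- General Laplace expansion of an n×n determinant along the first p rows
(1-based row indices 1,…,p): `det a` equals the sum over p-element column
subsets S = {j₁<⋯<j_p} of `(-1)^{(1+⋯+p)+(j₁+⋯+j_p)}` times the p×p minor on
rows 1,…,p and columns S, times the complementary (n−p)×(n−p) minor on rows
p+1,…,n and the complementary columns. -/
theorem det_eq_laplace_first_p_rows {n p : ℕ} (hp : p ≤ n)
    {R : Type*} [CommRing R] (a : Matrix (Fin n) (Fin n) R) :
    a.det = ∑ S : {S : Finset (Fin n) // S.card = p},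
      (-1 : R) ^ ((∑ j ∈ S.1, (j.val + 1)) + p * (p + 1) / 2) *
        (a.submatrix (fun i : Fin p => Fin.castLE hp i)
          (S.1.orderEmbOfFin S.2)).det *
        (a.submatrix (fun i : Fin (n - p) => (⟨p + i.val, by omega⟩ : Fin n))
          ((S.1ᶜ).orderEmbOfFin (by
            rw [Finset.card_compl, S.2]; simp))).det := by
  rw [det_apply', ← Fintype.sum_bijective _ (bijective_blockPerm_finSumEquivOfCardEq hp) _ _
    fun _ => rfl, Fintype.sum_prod_type]
  refine Fintype.sum_congr _ _ fun ⟨S, hS⟩ => ?_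
  rw [Fintype.sum_prod_type]
  dsimp only
  rw [← sign_mul_det_mul_det_eq_sum_blockPerm a (finSumEquivOfCardEq hS) (finSumFinSubEquiv hp),
    sign_shuffle]
  push_cast
  rfl
end

section
/- For an invertible n×n matrix a over a field, the second compound matrix m₂(a) satisfies det(m₂(a)) = (det a)^(n−1). -/
/-!
The second compound matrix of `a` is the matrix of `⋀² a` in the basis `eᵢ ∧ eⱼ` (`i < j`), so
`compound2` is multiplicative. Since every matrix over a field is a product of transvections and
a diagonal matrix, it remains to check the two kinds of factors. For `diagonal d`, the compound
is diagonal with entries `dᵢ dⱼ`, and each index occurs in `n - 1` pairs. For the transvection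
`1 + c Eᵢⱼ`, the compound differs from `1` only at entries `(S, T)` with `j ∉ S` and `j ∈ T`,
so it is unitriangular for the ordering of the pairs by whether they contain `j`.
-/

open Matrix

/-- The second compound matrix of an n×n matrix: the N×N matrix, N = n(n−1)/2,
indexed by 2-element subsets of {1,…,n}, whose ({i,j},{k,l}) entry is the 2×2
minor of `a` on rows i,j and columns k,l. -/
noncomputable def compound2 (n : ℕ) {K : Type*} [Field K]
    (a : Matrix (Fin n) (Fin n) K) :
    Matrix {S : Finset (Fin n) // S.card = 2} {S : Finset (Fin n) // S.card = 2} K :=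
  fun S T => (a.submatrix (S.1.orderEmbOfFin S.2) (T.1.orderEmbOfFin T.2)).det

open Finset

theorem Finset.eq_pair_orderEmbOfFin {α : Type*} [LinearOrder α] {s : Finset α}
    (h : s.card = 2) : s = {s.orderEmbOfFin h 0, s.orderEmbOfFin h 1} := by
  ext x
  rw [← mem_coe, ← range_orderEmbOfFin s h]
  simp only [Set.mem_range, Fin.exists_fin_two, mem_insert, mem_singleton, eq_comm]

theorem Finset.eq_iff_orderEmbOfFin_eq {α : Type*} [LinearOrder α] {s t : Finset α}
    (hs : s.card = 2) (ht : t.card = 2) :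
    s = t ↔ s.orderEmbOfFin hs 0 = t.orderEmbOfFin ht 0 ∧
      s.orderEmbOfFin hs 1 = t.orderEmbOfFin ht 1 := by
  refine ⟨by rintro rfl; simp, fun ⟨h₀, h₁⟩ => ?_⟩
  rw [eq_pair_orderEmbOfFin hs, eq_pair_orderEmbOfFin ht, h₀, h₁]

theorem card_filter_mem_pairs {α : Type*} [Fintype α] [DecidableEq α] (i : α) :
    #{S : {S : Finset α // S.card = 2} | i ∈ S.1} = Fintype.card α - 1 := by
  rw [← card_univ, ← card_erase_of_mem (mem_univ i)]
  symm
  refine card_bij (fun k hk => ⟨{i, k}, card_pair (ne_of_mem_erase hk).symm⟩) (by simp) ?_ ?_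
  · intro k hk l _ h
    have : k ∈ ({i, l} : Finset α) := by rw [← Subtype.mk.inj h]; simp
    simpa [ne_of_mem_erase hk] using this
  · rintro ⟨S, hS⟩ hi
    obtain ⟨a, b, hab, rfl⟩ := card_eq_two.1 hS
    simp only [mem_filter, mem_univ, true_and, mem_insert, mem_singleton] at hi
    rcases hi with rfl | rfl
    · exact ⟨b, by simpa using hab.symm, rfl⟩
    · exact ⟨a, by simpa using hab, by simp [pair_comm]⟩

theorem prod_pairs_prod {α M : Type*} [Fintype α] [DecidableEq α] [CommMonoid M] (d : α → M) :
    ∏ S : {S : Finset α // S.card = 2}, ∏ i ∈ S.1, d i = (∏ i, d i) ^ (Fintype.card α - 1) := by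
  rw [prod_comm' (t' := univ) (s' := fun i => {S | i ∈ S.1}) (by simp), ← prod_pow]
  exact prod_congr rfl fun i _ => by rw [prod_const, card_filter_mem_pairs]

def subtypeCardEquivPowersetCard (α : Type*) (k : ℕ) :
    {S : Finset α // S.card = k} ≃ Set.powersetCard α k :=
  Equiv.subtypeEquivRight fun _ => Set.powersetCard.mem_iff.symm

theorem Matrix.det_eq_one_of_apply_eq_one_apply {ι α R : Type*} [Fintype ι] [DecidableEq ι]
    [LinearOrder α] [CommRing R] (M : Matrix ι ι R) (w : ι → α)
    (hM : ∀ i j, ¬ w i < w j → M i j = (1 : Matrix ι ι R) i j) :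
    M.det = 1 := by
  have hM' : M.BlockTriangular w := fun i j hji => by
    rw [hM i j (not_lt_of_gt hji), one_apply_ne]
    rintro rfl
    exact lt_irrefl _ hji
  rw [hM'.det]
  refine prod_eq_one fun k _ => ?_
  suffices M.toSquareBlock w k = 1 by rw [this, det_one]
  ext x y
  rw [toSquareBlock_def, of_apply, hM _ _ (by rw [x.2, y.2]; exact lt_irrefl k)]
  simp only [one_apply, Subtype.ext_iff]

theorem Matrix.transvection_minor_two {ι R : Type*} [LinearOrder ι] [CommRing R] {i j : ι}
    (hij : i ≠ j) (c : R) {s₀ s₁ t₀ t₁ : ι} (hs : s₀ < s₁) (ht : t₀ < t₁)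
    (h : ¬ (j ≠ s₀ ∧ j ≠ s₁ ∧ (j = t₀ ∨ j = t₁))) :
    transvection i j c s₀ t₀ * transvection i j c s₁ t₁ -
      transvection i j c s₀ t₁ * transvection i j c s₁ t₀ =
      if s₀ = t₀ ∧ s₁ = t₁ then 1 else 0 := by
  simp only [transvection, add_apply, one_apply, single, of_apply]
  split_ifs <;> simp_all <;> order

section

variable {n : ℕ} {K : Type*} [Field K]

theorem compound2_eq_toMatrixAlgEquiv_exteriorPower_map (a : Matrix (Fin n) (Fin n) K) :
    compound2 n a =
      (LinearMap.toMatrixAlgEquiv ((Pi.basisFun K (Fin n)).exteriorPower 2)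
        (exteriorPower.map 2 (toLin' a))).submatrix
        (subtypeCardEquivPowersetCard (Fin n) 2) (subtypeCardEquivPowersetCard (Fin n) 2) := by
  ext S T
  rw [submatrix_apply, LinearMap.toMatrixAlgEquiv_apply, exteriorPower.basis_repr_apply,
    exteriorPower.basis_apply]
  simp only [compound2, subtypeCardEquivPowersetCard, exteriorPower.ιMulti_family,
    exteriorPower.map_apply_ιMulti, exteriorPower.ιMultiDual_apply_ιMulti, Function.comp_apply,
    Pi.basisFun_apply, toLin'_apply, mulVec_single, MulOpposite.op_one, one_smul,
    Module.Basis.coord_apply, Pi.basisFun_repr, col_apply]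
  rw [← det_transpose]
  rfl

theorem compound2_mul (a b : Matrix (Fin n) (Fin n) K) :
    compound2 n (a * b) = compound2 n a * compound2 n b := by
  simp only [compound2_eq_toMatrixAlgEquiv_exteriorPower_map, submatrix_mul_equiv]
  rw [toLin'_mul, exteriorPower.map_comp, ← Module.End.mul_eq_comp, map_mul]

theorem compound2_diagonal (d : Fin n → K) :
    compound2 n (diagonal d) = diagonal fun S => ∏ i ∈ S.1, d i := by
  ext S T
  by_cases hST : S = T
  · subst hST
    rw [diagonal_apply_eq, compound2, submatrix_diagonal d _ (S.1.orderEmbOfFin S.2).injective,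
      det_diagonal]
    conv_rhs => rw [← map_orderEmbOfFin_univ S.1 S.2, prod_map]
    rfl
  · rw [diagonal_apply_ne _ hST]
    obtain ⟨x, hxS, hxT⟩ : ∃ x ∈ S.1, x ∉ T.1 := by
      by_contra! h
      exact hST (Subtype.ext (eq_of_subset_of_card_le h (by rw [S.2, T.2])))
    rw [← mem_coe, ← range_orderEmbOfFin S.1 S.2] at hxS
    obtain ⟨k, rfl⟩ := hxS
    refine det_eq_zero_of_row_eq_zero k fun l => diagonal_apply_ne _ fun h => hxT ?_
    rw [h]
    exact orderEmbOfFin_mem _ _ _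

theorem det_compound2_diagonal (d : Fin n → K) :
    (compound2 n (diagonal d)).det = (diagonal d).det ^ (n - 1) := by
  rw [compound2_diagonal, det_diagonal, det_diagonal, prod_pairs_prod, Fintype.card_fin]

theorem compound2_transvection_apply {i j : Fin n} (hij : i ≠ j) (c : K)
    (S T : {S : Finset (Fin n) // S.card = 2}) (hST : ¬ (j ∉ S.1 ∧ j ∈ T.1)) :
    compound2 n (transvection i j c) S T = (1 : Matrix _ _ K) S T := by
  rw [eq_pair_orderEmbOfFin S.2, eq_pair_orderEmbOfFin T.2] at hST
  rw [compound2, det_fin_two, one_apply]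
  simp only [submatrix_apply, Subtype.ext_iff, eq_iff_orderEmbOfFin_eq S.2 T.2]
  exact transvection_minor_two hij c ((S.1.orderEmbOfFin S.2).strictMono Fin.zero_lt_one)
    ((T.1.orderEmbOfFin T.2).strictMono Fin.zero_lt_one) (by simpa [and_assoc] using hST)

theorem det_compound2_transvection {i j : Fin n} (hij : i ≠ j) (c : K) :
    (compound2 n (transvection i j c)).det = 1 :=
  det_eq_one_of_apply_eq_one_apply _ (fun S => decide (j ∈ S.1)) fun S T hST =>
    compound2_transvection_apply hij c S T (by simpa [Bool.lt_iff] using hST)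

end

theorem det_compound2_general {n : ℕ} {K : Type*} [Field K]
    (a : Matrix (Fin n) (Fin n) K) :
    (compound2 n a).det = a.det ^ (n - 1) := by
  induction a using diagonal_transvection_induction with
  | hdiag d _ => exact det_compound2_diagonal d
  | htransvec t =>
    rw [TransvectionStruct.toMatrix, det_compound2_transvection t.hij,
      det_transvection_of_ne _ _ t.hij, one_pow]
  | hmul a b ha hb => rw [compound2_mul, det_mul, det_mul, ha, hb, mul_pow]

/-- For an invertible n×n matrix (n ≥ 2), det(m₂(a)) = (det a)^{n−1}. -/
theorem det_compound2 {n : ℕ} (hn : 2 ≤ n) {K : Type*} [Field K]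
    (a : Matrix (Fin n) (Fin n) K) (ha : IsUnit a.det) :
    (compound2 n a).det = a.det ^ (n - 1) :=
  det_compound2_general a
end
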